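/- Let M be a model of PA and let X be an inductive subset of M. Then X is neutral if and only if for every elementary submodel K of M, the expanded structure (K, X ∩ K) is an elementary substructure of (M, X). -/

import Mathlib

open FirstOrder Language

namespace NeutralPA

/-- The function symbols of the language of arithmetic: `0`, `1`, `+`, `·`. -/
inductive ArithFunc : ℕ → Type
  | zero : ArithFunc 0
  | one : ArithFunc 0
  | add : ArithFunc 2
  | mul : ArithFunc 2

/-- The relation symbols of the language of arithmetic: `<`. -/
inductive ArithRel : ℕ → Type
  | lt : ArithRel 2

/-- The first-order language of arithmetic `{0, 1, +, ·, <}`. -/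
@[reducible] def arith : Language := ⟨ArithFunc, ArithRel⟩

/-- The relation symbols of the language with a single unary predicate `X`. -/
inductive XRel : ℕ → Type
  | mem : XRel 1

/-- The language consisting of a single unary predicate symbol `X`. -/
@[reducible] def xLang : Language := ⟨fun _ => Empty, XRel⟩

/-- The language of arithmetic together with a unary predicate symbol `X`. -/
@[reducible] def xArith : Language := arith.sum xLang

section Defs

variable {M : Type*} [arith.Structure M]

/-- Expansion of a model of arithmetic by a unary predicate interpreted as `X`. -/
def withX (X : Set M) : xArith.Structure M where
  funMap := fun {n} f v => match f with
    | Sum.inl g => Structure.funMap g v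
    | Sum.inr g => g.elim
  RelMap := fun {n} r v => match n, r, v with
    | _, Sum.inl r, v => Structure.RelMap r v
    | _, Sum.inr XRel.mem, v => v 0 ∈ X

/-- The definable closure of a single element `a` in an `L`-structure `M`:
the set of all `b` that are the unique solution of some `L`-formula `φ(a, y)`. -/
def dcl (L : Language) {M : Type*} [L.Structure M] (a : M) : Set M :=
  { b | ∃ φ : L.Formula (Fin 2), ∀ y : M, φ.Realize ![a, y] ↔ y = b }

/-- The definable closure of `a` in the expanded structure `(M, X)`. -/
def dclX (X : Set M) (a : M) : Set M :=
  @dcl xArith M (withX X) a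

/-- A subset `X ⊆ M` is neutral if it does not change the definable closure relation. -/
def Neutral (X : Set M) : Prop :=
  ∀ a : M, dcl arith a = dclX X a

/-- A subset of `M` is definable (with parameters) in the `L`-structure `M`. -/
def DefinableP (L : Language) {M : Type*} [L.Structure M] (s : Set M) : Prop :=
  ∃ (n : ℕ) (φ : L.Formula (Fin n ⊕ Fin 1)) (p : Fin n → M),
    ∀ x : M, x ∈ s ↔ φ.Realize (Sum.elim p ![x])

/-- A subset of `M` is definable without parameters in the `L`-structure `M`. -/
def Definable0 (L : Language) {M : Type*} [L.Structure M] (s : Set M) : Prop :=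
  ∃ φ : L.Formula (Fin 1), ∀ x : M, x ∈ s ↔ φ.Realize ![x]

/-- Semantic interpretations of the arithmetic symbols. -/
def m0 : M := @Structure.funMap arith M _ 0 ArithFunc.zero ![]

def m1 : M := @Structure.funMap arith M _ 0 ArithFunc.one ![]

def madd (a b : M) : M := @Structure.funMap arith M _ 2 ArithFunc.add ![a, b]

def mmul (a b : M) : M := @Structure.funMap arith M _ 2 ArithFunc.mul ![a, b]

def mlt (a b : M) : Prop := @Structure.RelMap arith M _ 2 ArithRel.lt ![a, b]

def mle (a b : M) : Prop := mlt a b ∨ a = b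

/-- The standard numerals in a model of arithmetic. -/
def num : ℕ → M
  | 0 => m0
  | n + 1 => madd (num n) m1

/-- `X` is a class of `M`: every initial-segment restriction is definable with parameters. -/
def IsClass (X : Set M) : Prop :=
  ∀ a : M, DefinableP arith { x | x ∈ X ∧ mlt x a }

end Defs

section PA

variable (L : Language)

/-- The term given by a constant symbol. -/
def cT (c : L.Functions 0) {α : Type} : L.Term α := Term.func c ![]

/-- The term given by a binary function symbol. -/
def b2T (f : L.Functions 2) {α : Type} (t u : L.Term α) : L.Term α := Term.func f ![t, u]

/-- The atomic bounded formula given by a binary relation symbol. -/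
def r2F (r : L.Relations 2) {α : Type} {n : ℕ} (t u : L.Term (α ⊕ Fin n)) :
    L.BoundedFormula α n := BoundedFormula.rel r ![t, u]

variable {L}

/-- The `i`-th bound variable, as a term. -/
def bv {n : ℕ} (i : Fin n) : L.Term (Empty ⊕ Fin n) := Term.var (Sum.inr i)

/-- Universal quantification over all the variables indexed by `Fin n`. -/
def iAllsn {α : Type} {n : ℕ} (φ : L.Formula (α ⊕ Fin n)) : L.Formula α :=
  (BoundedFormula.relabel id φ).alls

variable (L)

/-- The finitely many base axioms of `PA`, for an arbitrary language equipped with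
symbols `0`, `1`, `+`, `·`, `<`. -/
def paBase (z o : L.Functions 0) (pl ml : L.Functions 2) (lt : L.Relations 2) : L.Theory :=
  let zt : ∀ {n : ℕ}, L.Term (Empty ⊕ Fin n) := cT L z
  let ot : ∀ {n : ℕ}, L.Term (Empty ⊕ Fin n) := cT L o
  let A1 : L.BoundedFormula Empty 1 := ∼((b2T L pl (bv 0) ot).bdEqual zt)
  let A2 : L.BoundedFormula Empty 2 :=
    ((b2T L pl (bv 0) ot).bdEqual (b2T L pl (bv 1) ot)).imp ((bv 0).bdEqual (bv 1))
  let A3 : L.BoundedFormula Empty 1 := (b2T L pl (bv 0) zt).bdEqual (bv 0)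
  let A4 : L.BoundedFormula Empty 2 :=
    (b2T L pl (bv 0) (b2T L pl (bv 1) ot)).bdEqual (b2T L pl (b2T L pl (bv 0) (bv 1)) ot)
  let A5 : L.BoundedFormula Empty 1 := (b2T L ml (bv 0) zt).bdEqual zt
  let A6 : L.BoundedFormula Empty 2 :=
    (b2T L ml (bv 0) (b2T L pl (bv 1) ot)).bdEqual (b2T L pl (b2T L ml (bv 0) (bv 1)) (bv 0))
  let A7body : L.BoundedFormula Empty 3 :=
    (b2T L pl (b2T L pl (bv 2) (bv 0)) ot).bdEqual (bv 1)
  let A7 : L.BoundedFormula Empty 2 := (r2F L lt (bv 0) (bv 1)).iff A7body.ex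
  {A1.all, A2.all.all, A3.all, A4.all.all, A5.all, A6.all.all, A7.all.all}

/-- The induction axiom for a formula `φ(y₁, …, yₘ, x)`, where `x` (the `Sum.inr`
coordinate) is the induction variable and the `yᵢ` are parameters. -/
def indAx (z o : L.Functions 0) (pl : L.Functions 2) {m : ℕ}
    (φ : L.Formula (Fin m ⊕ Fin 1)) : L.Sentence :=
  let zt : L.Term (Fin m) := cT L z
  let phi0 : L.Formula (Fin m) := φ.subst (Sum.elim Term.var fun _ => zt)
  let succ : L.Term (Fin m ⊕ Fin 1) :=
    b2T L pl (Term.var (Sum.inr 0)) (cT L o)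
  let phiS : L.Formula (Fin m ⊕ Fin 1) :=
    φ.subst (Sum.elim (fun i => Term.var (Sum.inl i)) fun _ => succ)
  let step : L.Formula (Fin m) := iAllsn (φ.imp phiS)
  let concl : L.Formula (Fin m) := iAllsn φ
  iAllsn ((phi0.imp (step.imp concl)).relabel Sum.inr)

/-- Peano Arithmetic in a language equipped with symbols `0`, `1`, `+`, `·`, `<`:
the base axioms together with the induction scheme for all formulas of the language. -/
def paScheme (z o : L.Functions 0) (pl ml : L.Functions 2) (lt : L.Relations 2) : L.Theory :=
  paBase L z o pl ml lt ∪ ⋃ m : ℕ, Set.range fun φ : L.Formula (Fin m ⊕ Fin 1) => indAx L z o pl φ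

end PA

/-- The theory `PA` in the language of arithmetic. -/
def paT : arith.Theory :=
  paScheme arith ArithFunc.zero ArithFunc.one ArithFunc.add ArithFunc.mul ArithRel.lt

/-- The theory `PA*`: Peano arithmetic, with induction for all formulas in the language
of arithmetic expanded by a unary predicate. -/
def paStarT : xArith.Theory :=
  paScheme xArith (Sum.inl ArithFunc.zero) (Sum.inl ArithFunc.one) (Sum.inl ArithFunc.add)
    (Sum.inl ArithFunc.mul) (Sum.inl ArithRel.lt)

/-- `M`, with a given `L`-structure, is a model of the theory `T`. -/
def ModelOf (L : Language) (M : Type*) [L.Structure M] (T : L.Theory) : Prop :=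
  ∀ φ ∈ T, M ⊨ φ

section MDefs

variable {M : Type*} [arith.Structure M]

/-- `X ⊆ M` is inductive: the expansion `(M, X)` satisfies `PA*`. -/
def IndSet (X : Set M) : Prop :=
  @ModelOf xArith M (withX X) paStarT

/-- `M` is a prime model: every element is definable without parameters. -/
def IsPrimeM (M : Type*) [arith.Structure M] : Prop :=
  ∀ a : M, ∃ φ : arith.Formula (Fin 1), ∀ y : M, φ.Realize ![y] ↔ y = a

/-- The set of elements of `M` definable without parameters (the domain of the
prime elementary submodel, when it exists). -/
def dcl0 (M : Type*) [arith.Structure M] : Set M :=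
  { a | ∃ φ : arith.Formula (Fin 1), ∀ y : M, φ.Realize ![y] ↔ y = a }

end MDefs

section Pairs

variable {M : Type*} [arith.Structure M]

/-- For an elementary substructure `K ≼ M` and `X ⊆ M`: the expanded structure
`(K, X ∩ K)` is an elementary substructure of `(M, X)`. -/
def ElemPairSub (K : arith.ElementarySubstructure M) (X : Set M) : Prop :=
  ∀ (n : ℕ) (φ : xArith.Formula (Fin n)) (v : Fin n → K),
    @Formula.Realize xArith K (withX (Subtype.val ⁻¹' X)) (Fin n) φ v ↔
      @Formula.Realize xArith M (withX X) (Fin n) φ (fun i => (v i : M))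

/-- `(M, X) ≼ (N, Y)` along the map `f : M → N`:  `f` is elementary for the language
of arithmetic with an extra unary predicate, interpreted as `X` in `M` and `Y` in `N`. -/
def ElemPairEmb {N : Type*} [arith.Structure N] (f : M → N) (X : Set M) (Y : Set N) : Prop :=
  ∀ (n : ℕ) (φ : xArith.Formula (Fin n)) (v : Fin n → M),
    @Formula.Realize xArith M (withX X) (Fin n) φ v ↔
      @Formula.Realize xArith N (withX Y) (Fin n) φ (f ∘ v)

/-- An elementary embedding `f : M → N` is cofinal. -/
def Cofinal {N : Type*} [arith.Structure N] (f : M ↪ₑ[arith] N) : Prop :=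
  ∀ b : N, ∃ a : M, mle b (f a)

/-- An elementary embedding `f : M → N` is an end extension: every new element lies
above every element of (the image of) `M`. -/
def EndExt {N : Type*} [arith.Structure N] (f : M ↪ₑ[arith] N) : Prop :=
  ∀ b : N, b ∉ Set.range f → ∀ a : M, mlt (f a) b

/-- An elementary extension `f : M → N` is superminimal: every element of `N ∖ M`
generates all of `N` by definable closure. -/
def Superminimal {N : Type*} [arith.Structure N] (f : M ↪ₑ[arith] N) : Prop :=
  ∀ a : N, a ∉ Set.range f → ∀ b : N, b ∈ dcl arith a

end Pairs

section Coding

variable {M : Type*} [arith.Structure M]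

/-- `c` codes the (Cantor) pair `⟨a, b⟩`:  `2c = (a+b)(a+b+1) + 2a`. -/
def IsPair (c a b : M) : Prop :=
  madd c c = madd (mmul (madd a b) (madd (madd a b) m1)) (madd a a)

/-- `r` is the remainder of `a` modulo `m`. -/
def MMod (a m r : M) : Prop := mlt r m ∧ ∃ q : M, a = madd (mmul q m) r

/-- Gödel's β-function (as a relation): `β(c, i) = r`. -/
def Beta (c i r : M) : Prop :=
  ∃ a b : M, IsPair c a b ∧ MMod a (madd m1 (mmul (madd i m1) b)) r

/-- `s` is a coded sequence of length `l` (i.e. `s = ⟨c, l⟩` for some `c`). -/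
def SeqLen (s l : M) : Prop := ∃ c : M, IsPair s c l

/-- `e` is the `i`-th entry of the coded sequence `s`. -/
def Ent (s i e : M) : Prop := ∃ c l : M, IsPair s c l ∧ mlt i l ∧ Beta c i e

end Coding

section Generic

variable {M : Type*} [arith.Structure M]

/-- `p` is a condition of arithmetic Cohen forcing: a coded finite binary sequence. -/
def IsCond (p : M) : Prop :=
  ∃ c l : M, IsPair p c l ∧ ∀ i : M, mlt i l → (Beta c i m0 ∨ Beta c i m1)

/-- The condition `q` extends the condition `p`. -/
def CondExt (q p : M) : Prop :=
  IsCond q ∧ IsCond p ∧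
    ∃ cq lq cp lp : M, IsPair q cq lq ∧ IsPair p cp lp ∧ mle lp lq ∧
      ∀ i : M, mlt i lp → ∀ r : M, Beta cp i r ↔ Beta cq i r

/-- The condition `p` asserts that the bit at position `x` is `1`. -/
def BitOne (p x : M) : Prop :=
  ∃ c l : M, IsPair p c l ∧ mlt x l ∧ Beta c x m1

/-- `X ⊆ M` is generic: it is the union of a filter of coded finite binary sequences
meeting every dense definable subset of the forcing poset. -/
def GenericSet (X : Set M) : Prop :=
  ∃ G : Set M,
    (∀ p ∈ G, IsCond p) ∧
    (∀ p ∈ G, ∀ q : M, IsCond q → CondExt p q → q ∈ G) ∧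
    (∀ p ∈ G, ∀ q ∈ G, ∃ r ∈ G, CondExt r p ∧ CondExt r q) ∧
    (∀ D : Set M, (∀ d ∈ D, IsCond d) → DefinableP arith D →
      (∀ p : M, IsCond p → ∃ q ∈ D, CondExt q p) → ∃ q ∈ G, q ∈ D) ∧
    X = { x | ∃ p ∈ G, BitOne p x }

end Generic

section Encodings

/-- An explicit encoding of the arithmetic function symbols. -/
def arithFuncCode : (Σ n, ArithFunc n) → Fin 4
  | ⟨_, ArithFunc.zero⟩ => 0
  | ⟨_, ArithFunc.one⟩ => 1
  | ⟨_, ArithFunc.add⟩ => 2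
  | ⟨_, ArithFunc.mul⟩ => 3

def arithFuncDecode : Fin 4 → Σ n, ArithFunc n :=
  ![⟨0, ArithFunc.zero⟩, ⟨0, ArithFunc.one⟩, ⟨2, ArithFunc.add⟩, ⟨2, ArithFunc.mul⟩]

instance : Encodable (Σ n, ArithFunc n) :=
  Encodable.ofLeftInverse arithFuncCode arithFuncDecode (by rintro ⟨_, f⟩ <;> cases f <;> rfl)

instance : Encodable (Σ n, ArithRel n) :=
  Encodable.ofLeftInverse (fun _ => (0 : Fin 1)) (fun _ => ⟨2, ArithRel.lt⟩)
    (by rintro ⟨_, r⟩; cases r; rfl)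

instance instEncArithFunc : Encodable (Σ n, arith.Functions n) :=
  (inferInstance : Encodable (Σ n, ArithFunc n))

instance instEncSigmaBF {α : Type} [Encodable α] :
    Encodable (Σ n, arith.BoundedFormula α n) :=
  Encodable.ofLeftInjection (fun φ => φ.2.listEncode)
    (fun l => (BoundedFormula.listDecode l)[0]?)
    fun φ => BoundedFormula.encoding.decode_encode φ

instance instEncFormula {α : Type} [Encodable α] : Encodable (arith.Formula α) :=
  Encodable.ofLeftInjection (fun φ => (⟨0, φ⟩ : Σ n, arith.BoundedFormula α n))
    (fun ψ => match ψ with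
      | ⟨0, ψ⟩ => some ψ
      | _ => none)
    fun _ => rfl

/-- A set of formulas is recursive when its set of codes is computable. -/
def IsRecursive {α : Type} [Encodable α] (p : Set α) : Prop :=
  ComputablePred fun k : ℕ => ∃ x ∈ p, Encodable.encode x = k

end Encodings

section RecSat

variable (M : Type*) [arith.Structure M]

/-- The formula `x < y` where `x` is the `Sum.inr` variable and `y` is the `i`-th
`Sum.inl` variable; used to express that a type contains a formula `x < b`. -/
def ltParamFml {n : ℕ} (i : Fin n) : arith.Formula (Fin n ⊕ Fin 1) :=
  Relations.formula (ArithRel.lt : arith.Relations 2)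
    ![Term.var (Sum.inr 0), Term.var (Sum.inl i)]

/-- `M` is recursively saturated: every recursive type over finitely many parameters
of `M`, in one free variable, that is finitely realized in `M` is realized in `M`. -/
def RecSat : Prop :=
  ∀ (n : ℕ) (p : Set (arith.Formula (Fin n ⊕ Fin 1))) (v : Fin n → M),
    IsRecursive p →
    (∀ fs : Finset (arith.Formula (Fin n ⊕ Fin 1)), ↑fs ⊆ p →
      ∃ a : M, ∀ φ ∈ fs, Formula.Realize φ (Sum.elim v ![a])) →
    ∃ a : M, ∀ φ ∈ p, Formula.Realize φ (Sum.elim v ![a])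

/-- `M` is short recursively saturated: every recursive type over finitely many
parameters of `M` that contains a formula `x < b` for some parameter `b` and is
finitely realized in `M` is realized in `M`. -/
def ShortRecSat : Prop :=
  ∀ (n : ℕ) (p : Set (arith.Formula (Fin n ⊕ Fin 1))) (v : Fin n → M),
    IsRecursive p →
    (∃ i : Fin n, ltParamFml i ∈ p) →
    (∀ fs : Finset (arith.Formula (Fin n ⊕ Fin 1)), ↑fs ⊆ p →
      ∃ a : M, ∀ φ ∈ fs, Formula.Realize φ (Sum.elim v ![a])) →
    ∃ a : M, ∀ φ ∈ p, Formula.Realize φ (Sum.elim v ![a])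

end RecSat

section SatClass

variable {M : Type*} [arith.Structure M]

/-- `e` codes the tagged node `⟨t, a, b⟩` (a node of a syntax tree). -/
def Node (e t a b : M) : Prop := ∃ d : M, IsPair e t d ∧ IsPair d a b

/-- Internal syntax of terms (tags: `0` = variable, `1` = the constant `0`,
`2` = the constant `1`, `3` = addition, `4` = multiplication):
admissibility of an entry of a construction sequence. -/
def TermEnt (s i e : M) : Prop :=
  (∃ k : M, Node e (num 0) k m0) ∨ Node e (num 1) m0 m0 ∨ Node e (num 2) m0 m0 ∨
    (∃ a b j j' : M, mlt j i ∧ mlt j' i ∧ Ent s j a ∧ Ent s j' b ∧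
      (Node e (num 3) a b ∨ Node e (num 4) a b))

/-- `t` is a term in the sense of `M`. -/
def IsTerm (t : M) : Prop :=
  ∃ s : M, (∃ i : M, Ent s i t) ∧ ∀ i e : M, Ent s i e → TermEnt s i e

/-- The valuation `v` (a coded sequence) assigns the value `r` to the variable `k`. -/
def ValAt (v k r : M) : Prop := Ent v k r

/-- Admissibility of an entry of a term-evaluation sequence: entries are pairs
`⟨term, value⟩`, evaluated under the valuation `v`. -/
def TValEnt (v s i e : M) : Prop :=
  ∃ te re : M, IsPair e te re ∧
    ((∃ k : M, Node te (num 0) k m0 ∧ ValAt v k re) ∨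
      (Node te (num 1) m0 m0 ∧ re = m0) ∨
      (Node te (num 2) m0 m0 ∧ re = m1) ∨
      (∃ a b ra rb j j' pa pb : M, mlt j i ∧ mlt j' i ∧ Ent s j pa ∧ Ent s j' pb ∧
        IsPair pa a ra ∧ IsPair pb b rb ∧
        ((Node te (num 3) a b ∧ re = madd ra rb) ∨ (Node te (num 4) a b ∧ re = mmul ra rb))))

/-- The term (code) `t` has value `r` under the valuation `v`. -/
def TermVal (v t r : M) : Prop :=
  ∃ s : M, (∃ i e : M, Ent s i e ∧ IsPair e t r) ∧ ∀ i e : M, Ent s i e → TValEnt v s i e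

/-- Internal syntax of formulas (tags: `5` = `⊥`, `6` = `=`, `7` = `<`, `8` = `→`,
`9` = universal quantification binding the named variable in the first component):
admissibility of an entry of a construction sequence. -/
def FmlaEnt (s i e : M) : Prop :=
  Node e (num 5) m0 m0 ∨
    (∃ t u : M, (Node e (num 6) t u ∨ Node e (num 7) t u) ∧ IsTerm t ∧ IsTerm u) ∨
    (∃ a b j j' : M, mlt j i ∧ mlt j' i ∧ Ent s j a ∧ Ent s j' b ∧ Node e (num 8) a b) ∨
    (∃ k a j : M, mlt j i ∧ Ent s j a ∧ Node e (num 9) k a)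

/-- `f` is a formula in the sense of `M`. -/
def IsFmla (f : M) : Prop :=
  ∃ s : M, (∃ i : M, Ent s i f) ∧ ∀ i e : M, Ent s i e → FmlaEnt s i e

/-- `v'` is the valuation `v` modified so that variable `k` takes the value `a`. -/
def VMod (v k a v' : M) : Prop :=
  ValAt v' k a ∧ ∀ m r : M, m ≠ k → (ValAt v m r ↔ ValAt v' m r)

/-- The code (relative to a map `nm` giving the name of each variable) of a term
of the language of arithmetic. -/
def GTerm {β : Type*} (nm : β → M) : arith.Term β → M → Prop
  | Term.var b, e => Node e (num 0) (nm b) m0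
  | Term.func f ts, e =>
    match f, ts with
    | ArithFunc.zero, _ => Node e (num 1) m0 m0
    | ArithFunc.one, _ => Node e (num 2) m0 m0
    | ArithFunc.add, ts => ∃ a b : M, GTerm nm (ts 0) a ∧ GTerm nm (ts 1) b ∧ Node e (num 3) a b
    | ArithFunc.mul, ts => ∃ a b : M, GTerm nm (ts 0) a ∧ GTerm nm (ts 1) b ∧ Node e (num 4) a b

/-- The code of a formula of arithmetic with free variables among `Fin k`
(free variable `i` is named `i`; the variable bound at quantifier depth `j` is
named `k + j`). -/
def GFmla {k : ℕ} : ∀ {n : ℕ}, arith.BoundedFormula (Fin k) n → M → Prop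
  | n, BoundedFormula.falsum, e => Node e (num 5) m0 m0
  | n, BoundedFormula.equal t u, e =>
    ∃ a b : M, GTerm (Sum.elim (fun i : Fin k => num i) fun j : Fin n => num (k + j)) t a ∧
      GTerm (Sum.elim (fun i : Fin k => num i) fun j : Fin n => num (k + j)) u b ∧
      Node e (num 6) a b
  | n, BoundedFormula.rel R ts, e =>
    match R, ts with
    | ArithRel.lt, ts =>
      ∃ a b : M, GTerm (Sum.elim (fun i : Fin k => num i) fun j : Fin n => num (k + j)) (ts 0) a ∧
        GTerm (Sum.elim (fun i : Fin k => num i) fun j : Fin n => num (k + j)) (ts 1) b ∧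
        Node e (num 7) a b
  | _, BoundedFormula.imp f g, e => ∃ a b : M, GFmla f a ∧ GFmla g b ∧ Node e (num 8) a b
  | n, BoundedFormula.all f, e => ∃ a : M, GFmla f a ∧ Node e (num 9) (num (k + n)) a

/-- `S` is a full satisfaction class for `M`:  `S` is a set of (codes of) pairs
`⟨φ, v⟩` of `M`-formulas and `M`-valuations satisfying Tarski's compositional
conditions for all formulas in the sense of `M` — including nonstandard ones — and
agreeing with actual satisfaction on standard formulas. -/
def FullSatClass (S : Set M) : Prop :=
  (∀ x ∈ S, ∃ f v : M, IsPair x f v ∧ IsFmla f) ∧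
    (∀ e t u v x : M, Node e (num 6) t u → IsTerm t → IsTerm u → IsPair x e v →
      (x ∈ S ↔ ∃ r : M, TermVal v t r ∧ TermVal v u r)) ∧
    (∀ e t u v x : M, Node e (num 7) t u → IsTerm t → IsTerm u → IsPair x e v →
      (x ∈ S ↔ ∃ r r' : M, TermVal v t r ∧ TermVal v u r' ∧ mlt r r')) ∧
    (∀ e v x : M, Node e (num 5) m0 m0 → IsPair x e v → x ∉ S) ∧
    (∀ e f g v x xf xg : M, Node e (num 8) f g → IsFmla f → IsFmla g →
      IsPair x e v → IsPair xf f v → IsPair xg g v →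
      (x ∈ S ↔ (xf ∈ S → xg ∈ S))) ∧
    (∀ e k f v x : M, Node e (num 9) k f → IsFmla f → IsPair x e v →
      (x ∈ S ↔ ∀ a v' x' : M, VMod v k a v' → IsPair x' f v' → x' ∈ S)) ∧
    (∀ (k : ℕ) (φ : arith.Formula (Fin k)) (w : Fin k → M) (e v x : M),
      GFmla φ e → (∀ i : Fin k, ValAt v (num i) (w i)) → IsPair x e v →
      (x ∈ S ↔ φ.Realize w))

end SatClass


/-- `X` is `A`-neutral: for all `a, b ∈ A`, `a ∈ dcl(b)` iff `a ∈ dcl^{(M,X)}(b)`. -/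
def ANeutral {M : Type*} [arith.Structure M] (A X : Set M) : Prop :=
  ∀ a ∈ A, ∀ b ∈ A, (a ∈ dcl arith b ↔ a ∈ dclX X b)

/-!
If `X` is neutral and `K ≼ M`, the Tarski–Vaught test for `(K, X ∩ K)` inside `(M, X)` succeeds:
induction in `(M, X)` provides a least witness, which is definable in `(M, X)` from a code
`c ∈ K` of the parameters; by neutrality it is arithmetically definable from `c`, so it lies in
`K`. Conversely, in a model of `PA` the definable closure `dcl(a)` is itself an elementary
submodel (least witnesses again), and an element defined from `a` in `(M, X)` is defined by the
same formula in `(dcl(a), X ∩ dcl(a)) ≼ (M, X)`, hence lies in `dcl(a)`.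
-/

section Realize

variable {L : Language} {M : Type*} [L.Structure M] {α : Type}

@[simp] lemma realize_cT (c : L.Functions 0) (v : α → M) :
    (cT L c).realize v = Structure.funMap c ![] := by
  simp only [cT, Term.realize]
  congr 1
  exact Subsingleton.elim _ _

@[simp] lemma realize_b2T (f : L.Functions 2) (t u : L.Term α) (v : α → M) :
    (b2T L f t u).realize v = Structure.funMap f ![t.realize v, u.realize v] := by
  simp only [b2T, Term.realize]
  congr 1
  ext i; fin_cases i <;> rfl

@[simp] lemma realize_r2F (r : L.Relations 2) {n : ℕ} (t u : L.Term (α ⊕ Fin n)) (v : α → M)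
    (xs : Fin n → M) :
    (r2F L r t u).Realize v xs ↔
      Structure.RelMap r ![t.realize (Sum.elim v xs), u.realize (Sum.elim v xs)] := by
  simp only [r2F, BoundedFormula.Realize]
  congr! 1
  ext i; fin_cases i <;> rfl

@[simp] lemma realize_bv {n : ℕ} (i : Fin n) (v : Empty ⊕ Fin n → M) :
    (bv i : L.Term (Empty ⊕ Fin n)).realize v = v (Sum.inr i) := rfl

@[simp] lemma realize_iAllsn {n : ℕ} (φ : L.Formula (α ⊕ Fin n)) (v : α → M) :
    (iAllsn φ).Realize v ↔ ∀ w : Fin n → M, φ.Realize (Sum.elim v w) := by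
  rw [iAllsn, BoundedFormula.realize_alls]
  simp only [BoundedFormula.realize_relabel, Function.comp_id]
  refine forall_congr' fun w => iff_of_eq ?_
  congr 1
  exact Subsingleton.elim _ _

@[simp] lemma realize_formula_subst {β : Type} (φ : L.Formula α) (tf : α → L.Term β)
    (v : β → M) : Formula.Realize (φ.subst tf) v ↔ φ.Realize fun a => (tf a).realize v :=
  BoundedFormula.realize_subst

end Realize

section Definability

variable {L : Language} {M : Type*} [L.Structure M] {α β γ : Type}

def DefinablePred (L : Language) {M : Type*} [L.Structure M] {α : Type}
    (P : (α → M) → Prop) : Prop :=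
  ∃ φ : L.Formula α, ∀ v : α → M, P v ↔ φ.Realize v

def TermDefinable (L : Language) {M : Type*} [L.Structure M] {α : Type}
    (f : (α → M) → M) : Prop :=
  ∃ t : L.Term α, ∀ v : α → M, f v = t.realize v

namespace TermDefinable

lemma var (a : α) : TermDefinable L (fun v : α → M => v a) := ⟨Term.var a, fun _ => rfl⟩

lemma func {n : ℕ} (g : L.Functions n) {f : Fin n → (α → M) → M}
    (hf : ∀ i, TermDefinable L (f i)) :
    TermDefinable L (fun v => Structure.funMap g fun i => f i v) := by
  choose t ht using hf
  exact ⟨Term.func g t, fun v => by simp [ht]⟩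

end TermDefinable

namespace DefinablePred

variable {P Q : (α → M) → Prop}

lemma realize (φ : L.Formula α) : DefinablePred L (fun v : α → M => φ.Realize v) :=
  ⟨φ, fun _ => Iff.rfl⟩

lemma of_iff (h : DefinablePred L P) (hPQ : ∀ v, P v ↔ Q v) : DefinablePred L Q :=
  let ⟨φ, hφ⟩ := h
  ⟨φ, fun v => (hPQ v).symm.trans (hφ v)⟩

lemma eq {f g : (α → M) → M} (hf : TermDefinable L f) (hg : TermDefinable L g) :
    DefinablePred L (fun v => f v = g v) := by
  obtain ⟨t, ht⟩ := hf
  obtain ⟨u, hu⟩ := hg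
  exact ⟨t.equal u, fun v => by simp [ht, hu]⟩

lemma bot : DefinablePred L (fun _ : α → M => False) :=
  ⟨⊥, fun _ => Formula.realize_bot.symm⟩

lemma and (hP : DefinablePred L P) (hQ : DefinablePred L Q) :
    DefinablePred L (fun v => P v ∧ Q v) :=
  let ⟨φ, hφ⟩ := hP
  let ⟨ψ, hψ⟩ := hQ
  ⟨φ ⊓ ψ, fun v => (and_congr (hφ v) (hψ v)).trans Formula.realize_inf.symm⟩

lemma or (hP : DefinablePred L P) (hQ : DefinablePred L Q) :
    DefinablePred L (fun v => P v ∨ Q v) :=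
  let ⟨φ, hφ⟩ := hP
  let ⟨ψ, hψ⟩ := hQ
  ⟨φ ⊔ ψ, fun v => (or_congr (hφ v) (hψ v)).trans Formula.realize_sup.symm⟩

lemma imp (hP : DefinablePred L P) (hQ : DefinablePred L Q) :
    DefinablePred L (fun v => P v → Q v) :=
  let ⟨φ, hφ⟩ := hP
  let ⟨ψ, hψ⟩ := hQ
  ⟨φ.imp ψ, fun v => (imp_congr (hφ v) (hψ v)).trans Formula.realize_imp.symm⟩

lemma all_fun [Finite γ] {P : (α → M) → (γ → M) → Prop}
    (h : DefinablePred L fun w : α ⊕ γ → M => P (fun a => w (.inl a)) (fun c => w (.inr c))) :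
    DefinablePred L (fun v => ∀ t, P v t) :=
  let ⟨φ, hφ⟩ := h
  ⟨φ.iAlls γ, fun v => by
    rw [Formula.realize_iAlls]
    exact forall_congr' fun t => hφ (Sum.elim v t)⟩

lemma ex_fun [Finite γ] {P : (α → M) → (γ → M) → Prop}
    (h : DefinablePred L fun w : α ⊕ γ → M => P (fun a => w (.inl a)) (fun c => w (.inr c))) :
    DefinablePred L (fun v => ∃ t, P v t) :=
  let ⟨φ, hφ⟩ := h
  ⟨φ.iExs γ, fun v => by
    rw [Formula.realize_iExs]
    exact exists_congr fun t => hφ (Sum.elim v t)⟩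

lemma all {P : (α → M) → M → Prop}
    (h : DefinablePred L fun w : α ⊕ Fin 1 → M => P (fun a => w (.inl a)) (w (.inr 0))) :
    DefinablePred L (fun v => ∀ y, P v y) :=
  (all_fun h).of_iff fun _ => ⟨fun H y => H ![y], fun H t => H (t 0)⟩

lemma ex {P : (α → M) → M → Prop}
    (h : DefinablePred L fun w : α ⊕ Fin 1 → M => P (fun a => w (.inl a)) (w (.inr 0))) :
    DefinablePred L (fun v => ∃ y, P v y) :=
  (ex_fun h).of_iff fun _ =>
    ⟨fun ⟨t, ht⟩ => ⟨t 0, ht⟩, fun ⟨y, hy⟩ => ⟨![y], hy⟩⟩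

lemma all_fin {k : ℕ} {P : Fin k → (α → M) → Prop} (h : ∀ i, DefinablePred L (P i)) :
    DefinablePred L (fun v => ∀ i, P i v) := by
  choose φ hφ using h
  exact ⟨Formula.iInf φ, fun v => by simp [hφ, Formula.realize_iInf]⟩

lemma comp {P : (β → M) → Prop} (hP : DefinablePred L P) {f : β → (α → M) → M}
    (hf : ∀ b, TermDefinable L (f b)) : DefinablePred L (fun v => P fun b => f b v) := by
  obtain ⟨φ, hφ⟩ := hP
  choose t ht using hf
  exact ⟨φ.subst t, fun v => (hφ _).trans <| by simp only [realize_formula_subst, ht]⟩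

end DefinablePred

abbrev DefinableRel (L : Language) {M : Type*} [L.Structure M] {n : ℕ}
    (Q : (Fin n → M) → M → Prop) : Prop :=
  DefinablePred L fun w : Fin n ⊕ Fin 1 → M => Q (fun i => w (.inl i)) (w (.inr 0))

lemma DefinableRel.comp {n : ℕ} {Q : (Fin n → M) → M → Prop} (hQ : DefinableRel L Q)
    {F : Fin n → (α → M) → M} {G : (α → M) → M} (hF : ∀ i, TermDefinable L (F i))
    (hG : TermDefinable L G) : DefinablePred L fun v => Q (fun i => F i v) (G v) :=
  DefinablePred.comp hQ (f := Sum.elim F fun _ => G) (by rintro (i | i); exacts [hF i, hG])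

end Definability

-- Lets the arithmetic of `PA` be developed once, for `M` and for its expansion `(M, X)`.
class ArithSymbols (L : Language) where
  zeroSym : L.Functions 0
  oneSym : L.Functions 0
  addSym : L.Functions 2
  mulSym : L.Functions 2
  ltSym : L.Relations 2

open ArithSymbols

instance : ArithSymbols arith := ⟨.zero, .one, .add, .mul, .lt⟩

instance : ArithSymbols xArith := ⟨.inl .zero, .inl .one, .inl .add, .inl .mul, .inl .lt⟩

section Operations

variable (L : Language) [ArithSymbols L] {M : Type*} [L.Structure M]

def pzero : M := Structure.funMap (zeroSym (L := L)) ![]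

def pone : M := Structure.funMap (oneSym (L := L)) ![]

def padd (a b : M) : M := Structure.funMap (addSym (L := L)) ![a, b]

def pmul (a b : M) : M := Structure.funMap (mulSym (L := L)) ![a, b]

def plt (a b : M) : Prop := Structure.RelMap (ltSym (L := L)) ![a, b]

def IsPAModel (M : Type*) [L.Structure M] : Prop :=
  ModelOf L M (paScheme L zeroSym oneSym addSym mulSym ltSym)

end Operations

section DefinableArith

variable {L : Language} [ArithSymbols L] {M : Type*} [L.Structure M] {α : Type}
  {f g : (α → M) → M}

lemma TermDefinable.pzero : TermDefinable L (fun _ : α → M => pzero L) :=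
  ⟨cT L zeroSym, fun _ => by simp [NeutralPA.pzero]⟩

lemma TermDefinable.pone : TermDefinable L (fun _ : α → M => pone L) :=
  ⟨cT L oneSym, fun _ => by simp [NeutralPA.pone]⟩

lemma TermDefinable.padd (hf : TermDefinable L f) (hg : TermDefinable L g) :
    TermDefinable L (fun v => padd L (f v) (g v)) :=
  let ⟨t, ht⟩ := hf
  let ⟨u, hu⟩ := hg
  ⟨b2T L addSym t u, fun _ => by simp [NeutralPA.padd, ht, hu]⟩

lemma TermDefinable.pmul (hf : TermDefinable L f) (hg : TermDefinable L g) :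
    TermDefinable L (fun v => pmul L (f v) (g v)) :=
  let ⟨t, ht⟩ := hf
  let ⟨u, hu⟩ := hg
  ⟨b2T L mulSym t u, fun _ => by simp [NeutralPA.pmul, ht, hu]⟩

lemma DefinablePred.plt (hf : TermDefinable L f) (hg : TermDefinable L g) :
    DefinablePred L (fun v => plt L (f v) (g v)) :=
  let ⟨t, ht⟩ := hf
  let ⟨u, hu⟩ := hg
  ⟨ltSym.formula₂ t u, fun _ => by simp [NeutralPA.plt, ht, hu]⟩

end DefinableArith

section Axioms

variable {L : Language} [ArithSymbols L] {M : Type*} [L.Structure M] (h : IsPAModel L M)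
include h

lemma IsPAModel.realize_base {φ : L.Sentence}
    (hφ : φ ∈ paBase L zeroSym oneSym addSym mulSym ltSym) : M ⊨ φ :=
  h φ (Or.inl hφ)

lemma IsPAModel.succ_ne_zero (x : M) : padd L x (pone L) ≠ pzero L := by
  simpa [Fin.snoc, padd, pone, pzero] using h.realize_base (Or.inl rfl) x

lemma IsPAModel.succ_injective {x y : M} (hxy : padd L x (pone L) = padd L y (pone L)) :
    x = y := by
  have := h.realize_base (Or.inr (Or.inl rfl)) x y
  simp only [padd, pone] at hxy
  simpa [Fin.snoc, hxy] using this

lemma IsPAModel.add_zero (x : M) : padd L x (pzero L) = x := by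
  simpa [Fin.snoc, padd, pzero] using h.realize_base (Or.inr (Or.inr (Or.inl rfl))) x

lemma IsPAModel.add_succ (x y : M) :
    padd L x (padd L y (pone L)) = padd L (padd L x y) (pone L) := by
  simpa [Fin.snoc, padd, pone] using h.realize_base (Or.inr (Or.inr (Or.inr (Or.inl rfl)))) x y

lemma IsPAModel.mul_zero (x : M) : pmul L x (pzero L) = pzero L := by
  simpa [Fin.snoc, pmul, pzero] using
    h.realize_base (Or.inr (Or.inr (Or.inr (Or.inr (Or.inl rfl))))) x

lemma IsPAModel.mul_succ (x y : M) :
    pmul L x (padd L y (pone L)) = padd L (pmul L x y) x := by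
  simpa [Fin.snoc, padd, pmul, pone] using
    h.realize_base (Or.inr (Or.inr (Or.inr (Or.inr (Or.inr (Or.inl rfl)))))) x y

lemma IsPAModel.lt_iff (x y : M) : plt L x y ↔ ∃ w, padd L (padd L w x) (pone L) = y := by
  simpa [Fin.snoc, padd, pone, plt] using
    h.realize_base (Or.inr (Or.inr (Or.inr (Or.inr (Or.inr (Or.inr rfl)))))) x y

/- Induction is only available for predicates definable without parameters; the inductions below
therefore generalize over their other variables. -/
theorem IsPAModel.induction {P : M → Prop}
    (definable : DefinablePred L fun v : Fin 1 → M => P (v 0))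
    (zero : P (pzero L)) (succ : ∀ x, P x → P (padd L x (pone L))) (x : M) : P x := by
  obtain ⟨φ, hφ⟩ := definable
  have := h (indAx L zeroSym oneSym addSym (φ.relabel (Sum.inr : Fin 1 → Fin 0 ⊕ Fin 1)))
    (Or.inr (Set.mem_iUnion.2 ⟨0, Set.mem_range_self _⟩))
  have hφ' : ∀ v, φ.Realize v ↔ P (v 0) := fun v => (hφ v).symm
  simp only [indAx, Sentence.Realize, realize_iAllsn, Formula.realize_relabel, Formula.realize_imp,
    realize_formula_subst, Sum.elim_comp_inr, hφ'] at this
  simp only [Function.comp_apply, Sum.elim_inr, realize_b2T, realize_cT,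
    Term.realize_var] at this
  exact this default zero (fun w => succ (w 0)) ![x]

end Axioms

-- With these rules `aesop` proves definability of a predicate by following its syntax.
attribute [local aesop safe apply] DefinablePred.eq DefinablePred.plt DefinablePred.bot
  DefinablePred.and DefinablePred.or DefinablePred.imp DefinablePred.all DefinablePred.ex
  DefinablePred.all_fun DefinableRel.comp
  TermDefinable.padd TermDefinable.pmul TermDefinable.pzero TermDefinable.pone TermDefinable.var

section Semiring

variable {L : Language} [ArithSymbols L] {M : Type*} [L.Structure M] (h : IsPAModel L M)
include h

lemma IsPAModel.zero_add (x : M) : padd L (pzero L) x = x := by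
  induction x using h.induction with
  | definable => aesop
  | zero => exact h.add_zero _
  | succ x ih => rw [h.add_succ, ih]

lemma IsPAModel.succ_add (x y : M) :
    padd L (padd L x (pone L)) y = padd L (padd L x y) (pone L) := by
  induction y using h.induction generalizing x with
  | definable => aesop
  | zero => rw [h.add_zero, h.add_zero]
  | succ y ih => rw [h.add_succ, ih, h.add_succ]

lemma IsPAModel.add_assoc (x y z : M) :
    padd L (padd L x y) z = padd L x (padd L y z) := by
  induction z using h.induction generalizing x y with
  | definable => aesop
  | zero => rw [h.add_zero, h.add_zero]
  | succ z ih => rw [h.add_succ, h.add_succ, h.add_succ, ih]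

lemma IsPAModel.add_comm (x y : M) : padd L x y = padd L y x := by
  induction y using h.induction generalizing x with
  | definable => aesop
  | zero => rw [h.add_zero, h.zero_add]
  | succ y ih => rw [h.add_succ, ih, h.succ_add]

lemma IsPAModel.mul_add (x y z : M) :
    pmul L x (padd L y z) = padd L (pmul L x y) (pmul L x z) := by
  induction z using h.induction generalizing x y with
  | definable => aesop
  | zero => rw [h.add_zero, h.mul_zero, h.add_zero]
  | succ z ih => rw [h.add_succ, h.mul_succ, h.mul_succ, ih, h.add_assoc]

lemma IsPAModel.zero_mul (x : M) : pmul L (pzero L) x = pzero L := by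
  induction x using h.induction with
  | definable => aesop
  | zero => exact h.mul_zero _
  | succ x ih => rw [h.mul_succ, ih, h.add_zero]

lemma IsPAModel.succ_mul (x y : M) :
    pmul L (padd L x (pone L)) y = padd L (pmul L x y) y := by
  induction y using h.induction generalizing x with
  | definable => aesop
  | zero => rw [h.mul_zero, h.mul_zero, h.add_zero]
  | succ y ih =>
    rw [h.mul_succ, h.mul_succ, ih, h.add_assoc, h.add_assoc, h.add_succ y, h.add_succ x,
      h.add_comm x y]

lemma IsPAModel.mul_comm (x y : M) : pmul L x y = pmul L y x := by
  induction y using h.induction generalizing x with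
  | definable => aesop
  | zero => rw [h.mul_zero, h.zero_mul]
  | succ y ih => rw [h.mul_succ, ih, h.succ_mul]

lemma IsPAModel.mul_assoc (x y z : M) :
    pmul L (pmul L x y) z = pmul L x (pmul L y z) := by
  induction z using h.induction generalizing x y with
  | definable => aesop
  | zero => rw [h.mul_zero, h.mul_zero, h.mul_zero]
  | succ z ih => rw [h.mul_succ, h.mul_succ, ih, h.mul_add]

lemma IsPAModel.add_right_cancel {x y z : M} (hxy : padd L x z = padd L y z) : x = y := by
  induction z using h.induction generalizing x y with
  | definable => aesop
  | zero => rwa [h.add_zero, h.add_zero] at hxy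
  | succ z ih =>
    rw [h.add_succ, h.add_succ] at hxy
    exact ih (h.succ_injective hxy)

lemma IsPAModel.eq_zero_or_eq_succ (x : M) : x = pzero L ∨ ∃ y, x = padd L y (pone L) := by
  induction x using h.induction with
  | definable => aesop
  | zero => exact .inl rfl
  | succ x _ => exact .inr ⟨x, rfl⟩

lemma IsPAModel.exists_add_eq_or_add_eq (x y : M) : ∃ d, padd L x d = y ∨ padd L y d = x := by
  induction x using h.induction generalizing y with
  | definable => aesop
  | zero => exact ⟨y, .inl (h.zero_add y)⟩
  | succ x ih =>
    obtain ⟨d, hd | hd⟩ := ih y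
    · rcases h.eq_zero_or_eq_succ d with rfl | ⟨e, rfl⟩
      · exact ⟨pone L, .inr (by rw [← hd, h.add_zero])⟩
      · exact ⟨e, .inl (by rw [h.succ_add, ← h.add_succ, hd])⟩
    · exact ⟨padd L d (pone L), .inr (by rw [h.add_succ, hd])⟩

lemma IsPAModel.add_mul (x y z : M) :
    pmul L (padd L x y) z = padd L (pmul L x z) (pmul L y z) := by
  rw [h.mul_comm, h.mul_add, h.mul_comm z, h.mul_comm z]

lemma IsPAModel.one_mul (x : M) : pmul L (pone L) x = x := by
  rw [← h.zero_add (pone L), h.succ_mul, h.zero_mul, h.zero_add]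

lemma IsPAModel.mul_one (x : M) : pmul L x (pone L) = x := by
  rw [h.mul_comm, h.one_mul]

abbrev IsPAModel.commSemiring : CommSemiring M where
  add := padd L
  mul := pmul L
  zero := pzero L
  one := pone L
  add_assoc := h.add_assoc
  zero_add := h.zero_add
  add_zero := h.add_zero
  add_comm := h.add_comm
  left_distrib := h.mul_add
  right_distrib := h.add_mul
  zero_mul := h.zero_mul
  mul_zero := h.mul_zero
  mul_assoc := h.mul_assoc
  one_mul := h.one_mul
  mul_one := h.mul_one
  mul_comm := h.mul_comm
  nsmul := @nsmulRec M ⟨pzero L⟩ ⟨padd L⟩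
  nsmul_zero _ := rfl
  nsmul_succ _ _ := rfl

end Semiring

section Order

variable {L : Language} [ArithSymbols L] {M : Type*} [L.Structure M] (h : IsPAModel L M)
include h

lemma IsPAModel.not_lt_zero (x : M) : ¬ plt L x (pzero L) := by
  rw [h.lt_iff]
  rintro ⟨w, hw⟩
  exact h.succ_ne_zero _ hw

lemma IsPAModel.lt_succ_self (x : M) : plt L x (padd L x (pone L)) :=
  (h.lt_iff _ _).2 ⟨pzero L, by rw [h.zero_add]⟩

lemma IsPAModel.lt_or_eq_of_lt_succ {x y : M} (hxy : plt L x (padd L y (pone L))) :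
    plt L x y ∨ x = y := by
  obtain ⟨w, hw⟩ := (h.lt_iff _ _).1 hxy
  rcases h.eq_zero_or_eq_succ w with rfl | ⟨e, rfl⟩
  · exact .inr (by rw [← h.zero_add x]; exact h.succ_injective hw)
  · refine .inl ((h.lt_iff _ _).2 ⟨e, h.succ_injective ?_⟩)
    rw [← hw, h.succ_add e]

lemma IsPAModel.lt_trichotomy (x y : M) : plt L x y ∨ x = y ∨ plt L y x := by
  have lt_of_add : ∀ {a b e : M}, padd L a (padd L e (pone L)) = b → plt L a b :=
    fun {a b e} hab => (h.lt_iff _ _).2 ⟨e, by rw [← hab, h.add_comm e, h.add_succ]⟩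
  obtain ⟨d, hd | hd⟩ := h.exists_add_eq_or_add_eq x y <;>
    rcases h.eq_zero_or_eq_succ d with rfl | ⟨e, rfl⟩
  · exact .inr (.inl (by rw [← hd, h.add_zero]))
  · exact .inl (lt_of_add hd)
  · exact .inr (.inl (by rw [← hd, h.add_zero]))
  · exact .inr (.inr (lt_of_add hd))

end Order

section Pairing

variable {L : Language} [ArithSymbols L] {M : Type*} [L.Structure M]

def pair (L : Language) [ArithSymbols L] {M : Type*} [L.Structure M] (a b : M) : M :=
  padd L (pmul L (padd L a b) (padd L a b)) a

lemma IsPAModel.pair_injective (h : IsPAModel L M) {a b a' b' : M}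
    (hp : pair L a b = pair L a' b') : a = a' ∧ b = b' := by
  let _ := h.commSemiring
  change (a + b) * (a + b) + a = (a' + b') * (a' + b') + a' at hp
  have cancel_left : ∀ {x y z : M}, z + x = z + y → x = y := fun {x y z} hxy =>
    h.add_right_cancel (z := z) <| by
      change x + z = y + z
      rwa [_root_.add_comm x, _root_.add_comm y]
  -- If `a' + b'` exceeds `a + b`, then `(a' + b')²` already exceeds `(a + b)² + a`.
  have not_lt : ∀ {a b a' b' e : M}, a + b + (e + 1) = a' + b' →
      (a' + b') * (a' + b') + a' ≠ (a + b) * (a + b) + a := by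
    intro a b a' b' e hs hp
    let k := b + (a + b) + 2 * (a + b) * e + e * e + 2 * e + a'
    refine h.succ_ne_zero k (cancel_left (z := (a + b) * (a + b) + a) ?_)
    calc (a + b) * (a + b) + a + (k + 1) = (a' + b') * (a' + b') + a' := by rw [← hs]; ring
      _ = (a + b) * (a + b) + a + 0 := by rw [hp, _root_.add_zero]
  have of_sum_eq (hs : a + b = a' + b') : a = a' ∧ b = b' := by
    rw [hs] at hp
    obtain rfl := cancel_left hp
    exact ⟨rfl, cancel_left hs⟩
  obtain ⟨d, hd | hd⟩ := h.exists_add_eq_or_add_eq (a + b) (a' + b') <;>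
    rcases h.eq_zero_or_eq_succ d with rfl | ⟨e, rfl⟩
  · exact of_sum_eq ((h.add_zero _).symm.trans hd)
  · exact absurd hp.symm (not_lt hd)
  · exact of_sum_eq (hd.symm.trans (h.add_zero _))
  · exact absurd hp (not_lt hd)

end Pairing

section LeastNumber

variable {L : Language} [ArithSymbols L] {M : Type*} [L.Structure M] (h : IsPAModel L M)
include h

theorem IsPAModel.exists_least {n : ℕ} {Q : (Fin n → M) → M → Prop} (hQ : DefinableRel L Q)
    (u : Fin n → M) {a : M} (ha : Q u a) : ∃ b, Q u b ∧ ∀ y, plt L y b → ¬ Q u y := by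
  suffices key :
      ∀ x u z, plt L z x → Q u z → ∃ b, Q u b ∧ ∀ y, plt L y b → ¬ Q u y from
    key _ u a (h.lt_succ_self a) ha
  intro x
  induction x using h.induction with
  | definable => aesop
  | zero => intro u z hz; exact absurd hz (h.not_lt_zero z)
  | succ x ih =>
    intro u z hz hQz
    rcases h.lt_or_eq_of_lt_succ hz with hz | rfl
    · exact ih u z hz hQz
    · by_cases hmin : ∃ y, plt L y z ∧ Q u y
      · obtain ⟨y, hy, hQy⟩ := hmin
        exact ih u y hy hQy
      · exact ⟨z, hQz, fun y hy hQy => hmin ⟨y, hy, hQy⟩⟩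

lemma IsPAModel.eq_of_least {P : M → Prop} {b b' : M}
    (hb : P b) (hb_min : ∀ y, plt L y b → ¬ P y)
    (hb' : P b') (hb'_min : ∀ y, plt L y b' → ¬ P y) : b = b' := by
  rcases h.lt_trichotomy b b' with hlt | heq | hlt
  · exact absurd hb (hb'_min b hlt)
  · exact heq
  · exact absurd hb' (hb_min b' hlt)

end LeastNumber

section DefinableClosure

variable {L : Language} {M : Type*} [L.Structure M]

theorem mem_dcl_of_unique {n : ℕ} {Θ : (Fin n → M) → M → Prop} (hΘ : DefinableRel L Θ)
    {c : M} {x : Fin n → M} (hx : ∀ i, x i ∈ dcl L c) {b : M} (hb : ∀ y, Θ x y ↔ y = b) :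
    b ∈ dcl L c := by
  choose φ hφ using hx
  obtain ⟨ψ, hψ⟩ : DefinablePred L fun v : Fin 2 → M =>
      ∃ t : Fin n → M, (∀ i, (φ i).Realize ![v 0, t i]) ∧ Θ t (v 1) := by
    refine .ex_fun (.and (.all_fin fun i => (DefinablePred.realize _).comp fun j => ?_)
      (hΘ.comp (fun i => .var _) (.var _)))
    fin_cases j <;> exact .var _
  refine ⟨ψ, fun y => (hψ _).symm.trans ⟨?_, ?_⟩⟩
  · rintro ⟨t, ht, hΘt⟩
    obtain rfl : t = x := funext fun i => (hφ i (t i)).1 (ht i)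
    exact (hb y).1 hΘt
  · rintro rfl
    exact ⟨x, fun i => (hφ i _).2 rfl, (hb _).2 rfl⟩

lemma self_mem_dcl (a : M) : a ∈ dcl L a :=
  ⟨(Term.var 1).equal (Term.var 0), fun y => by simp⟩

lemma mem_dcl_trans {a b c : M} (hab : b ∈ dcl L a) (hbc : c ∈ dcl L b) : c ∈ dcl L a := by
  obtain ⟨φ, hφ⟩ := hbc
  refine mem_dcl_of_unique (Θ := fun t y => φ.Realize ![t 0, y]) ?_ (x := ![b])
    (Fin.forall_fin_one.2 hab) hφ
  refine (DefinablePred.realize φ).comp fun j => ?_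
  fin_cases j <;> exact .var _

def dclSubstructure (L : Language) {M : Type*} [L.Structure M] (a : M) : L.Substructure M where
  carrier := dcl L a
  fun_mem f _ hx := mem_dcl_of_unique (Θ := fun t y => y = Structure.funMap f t)
    (.eq (.var _) (.func f fun _ => .var _)) hx fun _ => Iff.rfl

lemma definableRel_realize_snoc {n : ℕ} (φ : L.BoundedFormula Empty (n + 1)) :
    DefinableRel L fun (u : Fin n → M) y => φ.Realize default (Fin.snoc u y) := by
  refine ((DefinablePred.realize φ.toFormula).comp
    (f := Sum.elim Empty.elim fun j (w : Fin n ⊕ Fin 1 → M) =>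
      Fin.snoc (α := fun _ => M) (fun i => w (.inl i)) (w (.inr 0)) j)
    ?_).of_iff fun w => ?_
  · rintro (e | j)
    · exact e.elim
    · refine Fin.lastCases ?_ (fun i => ?_) j <;>
        simp only [Sum.elim_inr, Fin.snoc_last, Fin.snoc_castSucc] <;> exact .var _
  · rw [BoundedFormula.realize_toFormula]
    exact iff_of_eq (congrArg₂ _ (Subsingleton.elim _ _) rfl)

end DefinableClosure

section Hull

variable {L : Language} [ArithSymbols L] {M : Type*} [L.Structure M] (h : IsPAModel L M)
include h

theorem IsPAModel.exists_mem_dcl {n : ℕ} (φ : L.BoundedFormula Empty (n + 1)) {c : M}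
    {x : Fin n → M} (hx : ∀ i, x i ∈ dcl L c) {a : M}
    (ha : φ.Realize default (Fin.snoc x a)) :
    ∃ b ∈ dcl L c, φ.Realize default (Fin.snoc x b) := by
  have hQ := definableRel_realize_snoc (M := M) φ
  obtain ⟨b, hb, hb_min⟩ := h.exists_least hQ x ha
  have hleast : DefinableRel L fun u y => φ.Realize default (Fin.snoc u y) ∧
      ∀ z, plt L z y → ¬ φ.Realize default (Fin.snoc u z) :=
    .and hQ <| .all <| .imp (.plt (.var _) (.var _)) <|
      .imp (hQ.comp (fun _ => .var _) (.var _)) .bot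
  refine ⟨b, mem_dcl_of_unique hleast hx fun y =>
    ⟨fun hy => h.eq_of_least hy.1 hy.2 hb hb_min, ?_⟩, hb⟩
  rintro rfl
  exact ⟨hb, hb_min⟩

def IsPAModel.dclElementarySubstructure (a : M) : L.ElementarySubstructure M :=
  (dclSubstructure L a).toElementarySubstructure fun _ φ x _ ha =>
    let ⟨b, hb, hφb⟩ := h.exists_mem_dcl φ (fun i => (x i).2) ha
    ⟨⟨b, hb⟩, hφb⟩

end Hull

section Coding

variable {L : Language} [ArithSymbols L] {M : Type*} [L.Structure M]

lemma TermDefinable.pair {α : Type} {f g : (α → M) → M} (hf : TermDefinable L f)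
    (hg : TermDefinable L g) : TermDefinable L (fun v => pair L (f v) (g v)) :=
  .padd (.pmul (.padd hf hg) (.padd hf hg)) hf

lemma IsPAModel.fst_mem_dcl_pair (h : IsPAModel L M) (a b : M) : a ∈ dcl L (pair L a b) :=
  mem_dcl_of_unique (Θ := fun t y => ∃ z, pair L y z = t 0)
    (.ex (.eq (.pair (.var _) (.var _)) (.var _))) (x := ![pair L a b])
    (Fin.forall_fin_one.2 (self_mem_dcl _))
    fun _ => ⟨fun ⟨_, hz⟩ => (h.pair_injective hz).1, by rintro rfl; exact ⟨b, rfl⟩⟩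

lemma IsPAModel.snd_mem_dcl_pair (h : IsPAModel L M) (a b : M) : b ∈ dcl L (pair L a b) :=
  mem_dcl_of_unique (Θ := fun t y => ∃ z, pair L z y = t 0)
    (.ex (.eq (.pair (.var _) (.var _)) (.var _))) (x := ![pair L a b])
    (Fin.forall_fin_one.2 (self_mem_dcl _))
    fun _ => ⟨fun ⟨_, hz⟩ => (h.pair_injective hz).2, by rintro rfl; exact ⟨a, rfl⟩⟩

def code (L : Language) [ArithSymbols L] {M : Type*} [L.Structure M] :
    {n : ℕ} → (Fin n → M) → M
  | 0, _ => pzero L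
  | _ + 1, x => pair L (x 0) (code L (Fin.tail x))

lemma IsPAModel.mem_dcl_code (h : IsPAModel L M) {n : ℕ} (x : Fin n → M) (i : Fin n) :
    x i ∈ dcl L (code L x) := by
  induction n with
  | zero => exact i.elim0
  | succ n ih =>
    cases i using Fin.cases with
    | zero => exact h.fst_mem_dcl_pair _ _
    | succ i => exact mem_dcl_trans (h.snd_mem_dcl_pair _ _) (ih (Fin.tail x) i)

lemma code_mem (S : L.Substructure M) {n : ℕ} {x : Fin n → M} (hx : ∀ i, x i ∈ S) :
    code L x ∈ S := by
  have binary_mem (f : L.Functions 2) {a b : M} (ha : a ∈ S) (hb : b ∈ S) :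
      Structure.funMap f ![a, b] ∈ S :=
    S.fun_mem f _ fun i => by fin_cases i <;> assumption
  have pair_mem {a b : M} (ha : a ∈ S) (hb : b ∈ S) : pair L a b ∈ S :=
    have hab := binary_mem addSym ha hb
    binary_mem addSym (binary_mem mulSym hab hab) ha
  induction n with
  | zero => exact S.fun_mem zeroSym _ finZeroElim
  | succ n ih => exact pair_mem (hx 0) (ih fun i => hx i.succ)

end Coding

section Transfer

variable {L : Language}

lemma realize_iExs_relabel_cons {P : Type*} [L.Structure P] (φ : L.Formula (Fin 2)) (c : P) :
    ((φ.relabel (![.inl 0, .inr 0] : Fin 2 → Fin 1 ⊕ Fin 1)).iExs (Fin 1)).Realize ![c] ↔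
      ∃ y, φ.Realize ![c, y] := by
  simp only [Formula.realize_iExs, Formula.realize_relabel]
  refine ⟨fun ⟨y, hy⟩ => ⟨y 0, ?_⟩, fun ⟨y, hy⟩ => ⟨![y], ?_⟩⟩ <;>
    convert ‹φ.Realize _› using 2 <;> ext j <;> fin_cases j <;> rfl

lemma mem_range_of_mem_dcl {K N : Type*} [L.Structure K] [L.Structure N] {f : K → N}
    (hf : ∀ n (φ : L.Formula (Fin n)) (v : Fin n → K), φ.Realize (f ∘ v) ↔ φ.Realize v)
    {a : K} {b : N} (hb : b ∈ dcl L (f a)) : b ∈ Set.range f := by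
  obtain ⟨φ, hφ⟩ := hb
  have hex := (realize_iExs_relabel_cons φ (f a)).2 ⟨b, (hφ b).2 rfl⟩
  obtain ⟨d, hd⟩ := (realize_iExs_relabel_cons φ a).1 <| (hf _ _ ![a]).1 <| by
    convert hex using 2; ext j; fin_cases j; rfl
  refine ⟨d, (hφ (f d)).1 ?_⟩
  convert (hf _ φ ![a, d]).2 hd using 2
  ext j; fin_cases j <;> rfl

end Transfer

section Expansion

variable {M : Type*} [arith.Structure M]

lemma dcl_subset_dclX (X : Set M) (a : M) : dcl arith a ⊆ dclX X a := by
  let _ := withX X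
  have : (LHom.sumInl : arith →ᴸ xArith).IsExpansionOn M := ⟨fun _ _ => rfl, fun _ _ => rfl⟩
  rintro b ⟨φ, hφ⟩
  exact ⟨LHom.sumInl.onFormula φ, fun y => (LHom.realize_onFormula _ φ).trans (hφ y)⟩

def pairEmbedding (K : arith.ElementarySubstructure M) (X : Set M) :
    @Embedding xArith K M (withX (Subtype.val ⁻¹' X)) (withX X) :=
  letI := withX (Subtype.val ⁻¹' X : Set K)
  letI := withX X
  { toEmbedding := Function.Embedding.subtype _
    map_fun' := by rintro _ (f | f) _ <;> first | rfl | exact f.elim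
    map_rel' := by
      rintro _ (r | r) _
      · rfl
      · cases r; rfl }

theorem elemPairSub_of_neutral (hM : IsPAModel arith M) {X : Set M} (hXind : IndSet X)
    (hN : Neutral X) (K : arith.ElementarySubstructure M) : ElemPairSub K X := by
  let _ := withX X
  let _ := withX (Subtype.val ⁻¹' X : Set K)
  have hMX : IsPAModel xArith M := hXind
  intro n φ v
  refine ((pairEmbedding K X).isElementary_of_exists (fun n ψ x a ha => ?_) φ v).symm
  have hc : code arith (Subtype.val ∘ x) ∈ K := code_mem K.toSubstructure fun i => (x i).2
  obtain ⟨b, hb, hψb⟩ := hMX.exists_mem_dcl ψ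
    (fun i => dcl_subset_dclX X _ (hM.mem_dcl_code _ i)) ha
  obtain ⟨d, rfl⟩ := mem_range_of_mem_dcl (L := arith) (f := Subtype.val)
    (fun _ φ v => K.isElementary' φ v) (a := ⟨_, hc⟩) (by rwa [hN])
  exact ⟨d, hψb⟩

theorem neutral_of_elemPairSub (hM : IsPAModel arith M) {X : Set M}
    (hP : ∀ K : arith.ElementarySubstructure M, ElemPairSub K X) : Neutral X := by
  intro a
  refine (dcl_subset_dclX X a).antisymm fun b hb => ?_
  let K := hM.dclElementarySubstructure a
  let _ := withX X
  let _ := withX (Subtype.val ⁻¹' X : Set K)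
  obtain ⟨d, rfl⟩ := mem_range_of_mem_dcl (L := xArith) (fun n φ v => (hP K n φ v).symm)
    (a := ⟨a, self_mem_dcl a⟩) hb
  exact d.2

end Expansion

/-- An inductive subset `X` of a model `M` of PA is neutral iff for
every elementary submodel `K ≼ M`, `(K, X ∩ K) ≼ (M, X)`. -/
theorem inductive_neutral_iff_elementary_pairs
    {M : Type*} [arith.Structure M] (hM : ModelOf arith M paT)
    (X : Set M) (hXind : IndSet X) :
    Neutral X ↔ ∀ K : arith.ElementarySubstructure M, ElemPairSub K X :=
  ⟨fun hN => elemPairSub_of_neutral hM hXind hN, neutral_of_elemPairSub hM⟩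

end NeutralPA
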